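/- Let Ω be a bounded open set of ℝ^n. Then 1/ρ_F(Ω) equals the infimum, over all Lipschitz functions φ : ℝ^n → ℝ with φ = 0 on ℝ^n \ Ω and φ ≢ 0, of the quotient (ess sup_{x ∈ Ω} F(∇φ(x))) / (sup_{x ∈ Ω} |φ(x)|), where ∇φ denotes the almost-everywhere defined gradient of φ. In particular, for every such φ and every x ∈ Ω one has |φ(x)| ≤ (ess sup_{Ω} F(∇φ)) · d_F(x), and the infimum is attained by the function d_F extended by zero outside Ω. -/

import Mathlib

open MeasureTheory Set Filter
open scoped RealInnerProductSpace Topology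

noncomputable section
open Classical

/-- `n`-dimensional Euclidean space. -/
abbrev En (n : ℕ) : Type := EuclideanSpace ℝ (Fin n)

variable {n : ℕ}

/-- The first Dirichlet eigenvalue `λ₁(p,Ω)` of the anisotropic `p`-Laplacian:
the infimum of the Rayleigh quotient `∫_Ω F(∇φ)^p / ∫_Ω |φ|^p` over smooth
compactly supported test functions `φ ≢ 0` on `Ω`. -/
def lam1 (F : En n → ℝ) (p : ℝ) (Ω : Set (En n)) : ℝ :=
  sInf { r : ℝ | ∃ φ : En n → ℝ, ContDiff ℝ (⊤ : ℕ∞) φ ∧ HasCompactSupport φ ∧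
      tsupport φ ⊆ Ω ∧ φ ≠ 0 ∧
      r = (∫ x in Ω, F (gradient φ x) ^ p) / (∫ x in Ω, |φ x| ^ p) }

/-- `u` is an eigenfunction of the anisotropic `p`-Laplacian on `Ω` with
eigenvalue `lam`: it is `C¹` on `Ω`, continuous up to the boundary, vanishes on
`∂Ω`, is not identically zero, has `∫_Ω F(∇u)^p < ∞`, and satisfies the weak
Euler-Lagrange equation against all smooth compactly supported test functions.
(Note that `F(0) = 0` and `p > 1`, so `F(∇u)^{p-1} ∇_ξ F(∇u)` is interpreted
as `0` where `∇u = 0`, in accordance with the convention.) -/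
def IsEigenfunction (F : En n → ℝ) (p : ℝ) (Ω : Set (En n)) (lam : ℝ)
    (u : En n → ℝ) : Prop :=
  ContDiffOn ℝ 1 u Ω ∧ ContinuousOn u (closure Ω) ∧
  (∀ x ∈ frontier Ω, u x = 0) ∧ (∃ x ∈ Ω, u x ≠ 0) ∧
  IntegrableOn (fun x => F (gradient u x) ^ p) Ω ∧
  ∀ φ : En n → ℝ, ContDiff ℝ (⊤ : ℕ∞) φ → HasCompactSupport φ → tsupport φ ⊆ Ω →
    ∫ x in Ω, F (gradient u x) ^ (p - 1) * ⟪gradient F (gradient u x), gradient φ x⟫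
      = lam * ∫ x in Ω, |u x| ^ (p - 2) * u x * φ x

/-- `lam` is an eigenvalue of the anisotropic `p`-Laplacian on `Ω`. -/
def IsEigenvalue (F : En n → ℝ) (p : ℝ) (Ω : Set (En n)) (lam : ℝ) : Prop :=
  ∃ u, IsEigenfunction F p Ω lam u

/-- The first eigenvalue `λ₁(p,Ω)` is simple: any two eigenfunctions with
eigenvalue `λ₁(p,Ω)` are scalar multiples of each other (on `Ω`). -/
def IsSimple (F : En n → ℝ) (p : ℝ) (Ω : Set (En n)) : Prop :=
  ∀ u v, IsEigenfunction F p Ω (lam1 F p Ω) u → IsEigenfunction F p Ω (lam1 F p Ω) v →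
    ∃ c : ℝ, ∀ x ∈ Ω, u x = c * v x

/-- The second Dirichlet eigenvalue `λ₂(p,Ω)`:
`inf{λ > λ₁(p,Ω) : λ eigenvalue}` if `λ₁(p,Ω)` is simple, and `λ₁(p,Ω)` otherwise. -/
def lam2 (F : En n → ℝ) (p : ℝ) (Ω : Set (En n)) : ℝ :=
  if IsSimple F p Ω then sInf { lam | lam1 F p Ω < lam ∧ IsEigenvalue F p Ω lam }
  else lam1 F p Ω

/-- The Hessian of `G` is positive definite at every point of `ℝⁿ \ {0}`. -/
def HessPosDef (G : En n → ℝ) : Prop :=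
  ∀ ξ : En n, ξ ≠ 0 → ∀ v : En n, v ≠ 0 → 0 < iteratedFDeriv ℝ 2 G ξ ![v, v]

/-- The polar (dual) norm `F^o(v) = sup_{ξ ≠ 0} ⟨ξ,v⟩ / F(ξ)`. -/
def polar (F : En n → ℝ) (v : En n) : ℝ :=
  sSup { r : ℝ | ∃ ξ : En n, ξ ≠ 0 ∧ r = ⟪ξ, v⟫ / F ξ }

/-- The Wulff shape `𝒲 = {ξ : F^o(ξ) < 1}`. -/
def wulff (F : En n → ℝ) : Set (En n) := { ξ | polar F ξ < 1 }

/-- The Wulff shape of radius `r` centered at `x₀`: `𝒲_r(x₀) = r𝒲 + x₀`. -/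
def wulffR (F : En n → ℝ) (r : ℝ) (x₀ : En n) : Set (En n) :=
  (fun ξ => x₀ + r • ξ) '' wulff F

/-- `κ_n`, the Lebesgue measure of the Wulff shape. -/
def kappa (F : En n → ℝ) : ℝ := (volume (wulff F)).toReal

/-- The anisotropic distance to the boundary `d_F(x) = inf_{y ∈ ∂Ω} F^o(x - y)`. -/
def dF (F : En n → ℝ) (Ω : Set (En n)) (x : En n) : ℝ :=
  sInf { r : ℝ | ∃ y ∈ frontier Ω, r = polar F (x - y) }

/-- The anisotropic inradius `ρ_F(Ω) = sup_{x ∈ Ω} d_F(x)`. -/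
def rhoF (F : En n → ℝ) (Ω : Set (En n)) : ℝ :=
  sSup { r : ℝ | ∃ x ∈ Ω, r = dF F Ω x }

/-- `ρ_{2,F}(Ω)`: the supremum of radii `ρ > 0` such that two disjoint Wulff
shapes of radius `ρ` fit inside `Ω`. -/
def rho2F (F : En n → ℝ) (Ω : Set (En n)) : ℝ :=
  sSup { ρ : ℝ | 0 < ρ ∧ ∃ x₁ x₂ : En n, Disjoint (wulffR F ρ x₁) (wulffR F ρ x₂) ∧
      wulffR F ρ x₁ ⊆ Ω ∧ wulffR F ρ x₂ ⊆ Ω }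


/-- `D` is a nodal domain of `u` on `Ω`: a connected component of
`{x ∈ Ω : u x > 0}` or of `{x ∈ Ω : u x < 0}`. -/
def IsNodalDomain (Ω : Set (En n)) (u : En n → ℝ) (D : Set (En n)) : Prop :=
  (∃ x ∈ {y ∈ Ω | 0 < u y}, D = connectedComponentIn {y ∈ Ω | 0 < u y} x) ∨
  (∃ x ∈ {y ∈ Ω | u y < 0}, D = connectedComponentIn {y ∈ Ω | u y < 0} x)

/-- `J(ξ) = ½ ∇[F²](ξ)` for `ξ ≠ 0`, `J(0) = 0`. -/
def Jmap (F : En n → ℝ) (ξ : En n) : En n :=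
  if ξ = 0 then 0 else (1 / 2 : ℝ) • gradient (fun η => F η ^ 2) ξ

/-- The operator `𝒜_Λ(s, ξ, ·)`, where `q` stands for `⟨X J(ξ), J(ξ)⟩`. -/
def Aop (F : En n → ℝ) (Lam s : ℝ) (ξ : En n) (q : ℝ) : ℝ :=
  if 0 < s then min (F ξ - Lam * s) (-q)
  else if s = 0 then -q
  else max (-F ξ - Lam * s) (-q)

/-- Viscosity subsolution of `𝒜_Λ(u, ∇u, ∇²u) = 0` on `Ω`. -/
def ViscSubsol (F : En n → ℝ) (Lam : ℝ) (Ω : Set (En n)) (u : En n → ℝ) : Prop :=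
  ∀ x ∈ Ω, ∀ φ : En n → ℝ, ContDiff ℝ 2 φ →
    IsLocalMax (fun y => u y - φ y) x → u x = φ x →
    Aop F Lam (φ x) (gradient φ x)
      (iteratedFDeriv ℝ 2 φ x ![Jmap F (gradient φ x), Jmap F (gradient φ x)]) ≤ 0

/-- Viscosity supersolution of `𝒜_Λ(u, ∇u, ∇²u) = 0` on `Ω`. -/
def ViscSupersol (F : En n → ℝ) (Lam : ℝ) (Ω : Set (En n)) (u : En n → ℝ) : Prop :=
  ∀ x ∈ Ω, ∀ φ : En n → ℝ, ContDiff ℝ 2 φ →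
    IsLocalMin (fun y => u y - φ y) x → u x = φ x →
    0 ≤ Aop F Lam (φ x) (gradient φ x)
      (iteratedFDeriv ℝ 2 φ x ![Jmap F (gradient φ x), Jmap F (gradient φ x)])

/-- `Lam` is an eigenvalue of the anisotropic `∞`-Laplacian on `Ω`. -/
def IsInfEigenvalue (F : En n → ℝ) (Ω : Set (En n)) (Lam : ℝ) : Prop :=
  ∃ u : En n → ℝ, ContinuousOn u (closure Ω) ∧ (∀ x ∈ frontier Ω, u x = 0) ∧
    (∃ x ∈ Ω, u x ≠ 0) ∧ ViscSubsol F Lam Ω u ∧ ViscSupersol F Lam Ω u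


/-! ### Auxiliary lemmas -/

section FBasic

variable {F : En n → ℝ} {a b : ℝ}

theorem F_zero (hFhom : ∀ (t : ℝ) (ξ : En n), F (t • ξ) = |t| * F ξ) : F 0 = 0 := by
  have := hFhom 0 0
  simpa using this

theorem F_pos (hFlow : ∀ ξ : En n, a * ‖ξ‖ ≤ F ξ) (ha : 0 < a) {ξ : En n} (hξ : ξ ≠ 0) :
    0 < F ξ :=
  lt_of_lt_of_le (mul_pos ha (norm_pos_iff.mpr hξ)) (hFlow ξ)

theorem polar_elt_le (hFlow : ∀ ξ : En n, a * ‖ξ‖ ≤ F ξ) (ha : 0 < a)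
    {v ξ : En n} (hξ : ξ ≠ 0) : ⟪ξ, v⟫ / F ξ ≤ ‖v‖ / a := by
  have hF : 0 < F ξ := F_pos hFlow ha hξ
  have hn : 0 < ‖ξ‖ := norm_pos_iff.mpr hξ
  have h1 : ⟪ξ, v⟫ ≤ ‖ξ‖ * ‖v‖ := real_inner_le_norm ξ v
  rw [div_le_div_iff₀ hF ha]
  calc ⟪ξ, v⟫ * a ≤ (‖ξ‖ * ‖v‖) * a := by nlinarith
    _ = ‖v‖ * (a * ‖ξ‖) := by ring
    _ ≤ ‖v‖ * F ξ := by have := hFlow ξ; nlinarith [norm_nonneg v]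

theorem polar_bddAbove (hFlow : ∀ ξ : En n, a * ‖ξ‖ ≤ F ξ) (ha : 0 < a) (v : En n) :
    BddAbove { r : ℝ | ∃ ξ : En n, ξ ≠ 0 ∧ r = ⟪ξ, v⟫ / F ξ } := by
  refine ⟨‖v‖ / a, ?_⟩
  rintro r ⟨ξ, hξ, rfl⟩
  exact polar_elt_le hFlow ha hξ

theorem exists_ne_zero (hn : 2 ≤ n) : ∃ ξ : En n, ξ ≠ 0 := by
  refine ⟨EuclideanSpace.single (⟨0, by omega⟩ : Fin n) (1:ℝ), fun h => ?_⟩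
  have := congrArg (fun f : En n => f (⟨0, by omega⟩ : Fin n)) h
  simp [EuclideanSpace.single] at this

theorem polar_set_nonempty (hn : 2 ≤ n) (v : En n) :
    { r : ℝ | ∃ ξ : En n, ξ ≠ 0 ∧ r = ⟪ξ, v⟫ / F ξ }.Nonempty := by
  obtain ⟨ξ, hξ⟩ := exists_ne_zero hn
  exact ⟨_, ξ, hξ, rfl⟩

theorem polar_le (hn : 2 ≤ n) (hFlow : ∀ ξ : En n, a * ‖ξ‖ ≤ F ξ) (ha : 0 < a) (v : En n) :
    polar F v ≤ ‖v‖ / a := by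
  apply csSup_le (polar_set_nonempty hn v)
  rintro r ⟨ξ, hξ, rfl⟩
  exact polar_elt_le hFlow ha hξ

theorem polar_nonneg (hn : 2 ≤ n) (hFlow : ∀ ξ : En n, a * ‖ξ‖ ≤ F ξ) (ha : 0 < a)
    (v : En n) : 0 ≤ polar F v := by
  obtain ⟨ξ, hξ⟩ := exists_ne_zero hn
  rcases le_or_gt 0 ⟪ξ, v⟫ with h | h
  · have : (0:ℝ) ≤ ⟪ξ, v⟫ / F ξ := div_nonneg h (F_pos hFlow ha hξ).le
    exact this.trans (le_csSup (polar_bddAbove hFlow ha v) ⟨ξ, hξ, rfl⟩)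
  · have hξ' : -ξ ≠ 0 := neg_ne_zero.mpr hξ
    have : (0:ℝ) ≤ ⟪-ξ, v⟫ / F (-ξ) := by
      apply div_nonneg _ (F_pos hFlow ha hξ').le
      rw [inner_neg_left]; linarith
    exact this.trans (le_csSup (polar_bddAbove hFlow ha v) ⟨-ξ, hξ', rfl⟩)

theorem le_polar (hFup : ∀ ξ : En n, F ξ ≤ b * ‖ξ‖) (hFlow : ∀ ξ : En n, a * ‖ξ‖ ≤ F ξ)
    (hn : 2 ≤ n) (ha : 0 < a) (hab : a ≤ b) (v : En n) : ‖v‖ / b ≤ polar F v := by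
  have hb : 0 < b := lt_of_lt_of_le ha hab
  rcases eq_or_ne v 0 with rfl | hv
  · simpa using polar_nonneg hn hFlow ha (0 : En n)
  · have hmem : ⟪v, v⟫ / F v ∈ { r : ℝ | ∃ ξ : En n, ξ ≠ 0 ∧ r = ⟪ξ, v⟫ / F ξ } := ⟨v, hv, rfl⟩
    have h1 : ‖v‖ / b ≤ ⟪v, v⟫ / F v := by
      rw [real_inner_self_eq_norm_sq]
      have hF : 0 < F v := F_pos hFlow ha hv
      rw [div_le_div_iff₀ hb hF]
      have := hFup v
      nlinarith [norm_nonneg v]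
    exact h1.trans (le_csSup (polar_bddAbove hFlow ha v) hmem)

theorem inner_le_F_mul_polar (hFhom : ∀ (t : ℝ) (ξ : En n), F (t • ξ) = |t| * F ξ)
    (hFlow : ∀ ξ : En n, a * ‖ξ‖ ≤ F ξ) (ha : 0 < a)
    (ξ v : En n) : ⟪ξ, v⟫ ≤ F ξ * polar F v := by
  rcases eq_or_ne ξ 0 with rfl | hξ
  · simp [F_zero hFhom]
  · have hF : 0 < F ξ := F_pos hFlow ha hξ
    have : ⟪ξ, v⟫ / F ξ ≤ polar F v :=
      le_csSup (polar_bddAbove hFlow ha v) ⟨ξ, hξ, rfl⟩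
    calc ⟪ξ, v⟫ = (⟪ξ, v⟫ / F ξ) * F ξ := by field_simp
      _ ≤ polar F v * F ξ := by nlinarith
      _ = F ξ * polar F v := mul_comm _ _

theorem polar_add_le (hn : 2 ≤ n) (hFlow : ∀ ξ : En n, a * ‖ξ‖ ≤ F ξ) (ha : 0 < a)
    (u v : En n) : polar F (u + v) ≤ polar F u + polar F v := by
  apply csSup_le (polar_set_nonempty hn _)
  rintro r ⟨ξ, hξ, rfl⟩
  have h1 : ⟪ξ, u⟫ / F ξ ≤ polar F u := le_csSup (polar_bddAbove hFlow ha u) ⟨ξ, hξ, rfl⟩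
  have h2 : ⟪ξ, v⟫ / F ξ ≤ polar F v := le_csSup (polar_bddAbove hFlow ha v) ⟨ξ, hξ, rfl⟩
  have : ⟪ξ, u + v⟫ = ⟪ξ, u⟫ + ⟪ξ, v⟫ := inner_add_right ξ u v
  rw [this, add_div]
  exact add_le_add h1 h2

theorem polar_neg (hFhom : ∀ (t : ℝ) (ξ : En n), F (t • ξ) = |t| * F ξ)
    (v : En n) : polar F (-v) = polar F v := by
  have hFneg : ∀ ξ : En n, F (-ξ) = F ξ := by
    intro ξ; have := hFhom (-1) ξ; simpa using this
  have hset : { r : ℝ | ∃ ξ : En n, ξ ≠ 0 ∧ r = ⟪ξ, -v⟫ / F ξ }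
      = { r : ℝ | ∃ ξ : En n, ξ ≠ 0 ∧ r = ⟪ξ, v⟫ / F ξ } := by
    ext r
    constructor
    · rintro ⟨ξ, hξ, rfl⟩
      exact ⟨-ξ, neg_ne_zero.mpr hξ, by rw [inner_neg_left, inner_neg_right, hFneg]⟩
    · rintro ⟨ξ, hξ, rfl⟩
      exact ⟨-ξ, neg_ne_zero.mpr hξ, by rw [inner_neg_left, inner_neg_right, hFneg, neg_neg]⟩
  unfold polar
  rw [hset]

theorem polar_smul (hn : 2 ≤ n) (hFlow : ∀ ξ : En n, a * ‖ξ‖ ≤ F ξ) (ha : 0 < a)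
    {t : ℝ} (ht : 0 ≤ t) (v : En n) : polar F (t • v) = t * polar F v := by
  rcases eq_or_lt_of_le ht with rfl | ht'
  · simp only [zero_smul, zero_mul]
    apply le_antisymm
    · apply csSup_le (polar_set_nonempty hn _)
      rintro r ⟨ξ, hξ, rfl⟩
      simp
    · exact polar_nonneg hn hFlow ha 0
  · apply le_antisymm
    · apply csSup_le (polar_set_nonempty hn _)
      rintro r ⟨ξ, hξ, rfl⟩
      have h1 : ⟪ξ, v⟫ / F ξ ≤ polar F v := le_csSup (polar_bddAbove hFlow ha v) ⟨ξ, hξ, rfl⟩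
      rw [inner_smul_right]
      rw [mul_div_assoc]
      exact mul_le_mul_of_nonneg_left h1 ht
    · rw [← le_div_iff₀' ht']
      apply csSup_le (polar_set_nonempty hn _)
      rintro r ⟨ξ, hξ, rfl⟩
      rw [le_div_iff₀' ht']
      have : t * (⟪ξ, v⟫ / F ξ) = ⟪ξ, t • v⟫ / F ξ := by
        rw [inner_smul_right]; ring
      rw [this]
      exact le_csSup (polar_bddAbove hFlow ha _) ⟨ξ, hξ, rfl⟩

theorem polar_sub_le (hn : 2 ≤ n) (hFlow : ∀ ξ : En n, a * ‖ξ‖ ≤ F ξ) (ha : 0 < a)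
    (x y z : En n) : polar F (x - z) ≤ polar F (x - y) + polar F (y - z) := by
  have : x - z = (x - y) + (y - z) := by abel
  rw [this]
  exact polar_add_le hn hFlow ha _ _

end FBasic

section dFBasic

variable {F : En n → ℝ} {a b : ℝ} {Ω : Set (En n)}

theorem dF_nonneg (hn : 2 ≤ n) (hFlow : ∀ ξ : En n, a * ‖ξ‖ ≤ F ξ) (ha : 0 < a)
    (x : En n) : 0 ≤ dF F Ω x := by
  apply Real.sInf_nonneg
  rintro r ⟨y, hy, rfl⟩
  exact polar_nonneg hn hFlow ha _

theorem dF_bddBelow (hn : 2 ≤ n) (hFlow : ∀ ξ : En n, a * ‖ξ‖ ≤ F ξ) (ha : 0 < a)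
    (x : En n) : BddBelow { r : ℝ | ∃ y ∈ frontier Ω, r = polar F (x - y) } := by
  refine ⟨0, ?_⟩
  rintro r ⟨y, hy, rfl⟩
  exact polar_nonneg hn hFlow ha _

theorem dF_le (hn : 2 ≤ n) (hFlow : ∀ ξ : En n, a * ‖ξ‖ ≤ F ξ) (ha : 0 < a)
    {y : En n} (hy : y ∈ frontier Ω) (x : En n) : dF F Ω x ≤ polar F (x - y) :=
  csInf_le (dF_bddBelow hn hFlow ha x) ⟨y, hy, rfl⟩

theorem le_dF (hfr : (frontier Ω).Nonempty) {c : ℝ} {x : En n}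
    (h : ∀ y ∈ frontier Ω, c ≤ polar F (x - y)) : c ≤ dF F Ω x := by
  apply le_csInf
  · obtain ⟨y, hy⟩ := hfr
    exact ⟨_, y, hy, rfl⟩
  · rintro r ⟨y, hy, rfl⟩
    exact h y hy

theorem dF_sub_le (hn : 2 ≤ n) (hFlow : ∀ ξ : En n, a * ‖ξ‖ ≤ F ξ) (ha : 0 < a)
    (hfr : (frontier Ω).Nonempty) (x y : En n) :
    dF F Ω x ≤ polar F (x - y) + dF F Ω y := by
  have h : ∀ z ∈ frontier Ω, dF F Ω x - polar F (x - y) ≤ polar F (y - z) := by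
    intro z hz
    have h1 : dF F Ω x ≤ polar F (x - z) := dF_le hn hFlow ha hz x
    have h2 : polar F (x - z) ≤ polar F (x - y) + polar F (y - z) :=
      polar_sub_le hn hFlow ha x y z
    linarith
  have := le_dF (F := F) hfr h
  linarith

/-- First exit point of the segment from `x ∈ Ω` to `y ∉ Ω`. -/
theorem exists_exit (hΩ : IsOpen Ω) {x y : En n} (hx : x ∈ Ω) (hy : y ∉ Ω) :
    ∃ t : ℝ, t ∈ Set.Ioc (0:ℝ) 1 ∧ (x + t • (y - x)) ∈ frontier Ω ∧
      ∀ s, 0 ≤ s → s < t → x + s • (y - x) ∈ Ω := by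
  set c : ℝ → En n := fun s => x + s • (y - x) with hc
  have hcont : Continuous c := by continuity
  set S : Set ℝ := {s ∈ Set.Icc (0:ℝ) 1 | c s ∉ Ω} with hS
  have h1S : (1:ℝ) ∈ S := by
    constructor
    · exact ⟨zero_le_one, le_refl 1⟩
    · simp only [hc, one_smul]
      convert hy using 2
      abel
  have hSne : S.Nonempty := ⟨1, h1S⟩
  have hSbdd : BddBelow S := ⟨0, fun s hs => hs.1.1⟩
  set t := sInf S with htdef
  have ht_le : t ≤ 1 := csInf_le hSbdd h1S
  have ht_mem_lb : ∀ s ∈ S, t ≤ s := fun s hs => csInf_le hSbdd hs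
  have hbefore : ∀ s, 0 ≤ s → s < t → c s ∈ Ω := by
    intro s hs0 hst
    by_contra hcs
    have hs1 : s ≤ 1 := le_trans hst.le ht_le
    have : s ∈ S := ⟨⟨hs0, hs1⟩, hcs⟩
    exact absurd (ht_mem_lb s this) (not_le.mpr hst)
  -- t > 0
  have hc0 : c 0 = x := by simp [hc]
  have hpre : IsOpen (c ⁻¹' Ω) := hΩ.preimage hcont
  have h0pre : (0:ℝ) ∈ c ⁻¹' Ω := by rw [Set.mem_preimage, hc0]; exact hx
  obtain ⟨η, hη, hball⟩ := Metric.isOpen_iff.1 hpre 0 h0pre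
  have htpos : 0 < t := by
    have : ∀ s ∈ S, η ≤ s := by
      intro s hs
      by_contra hlt
      push_neg at hlt
      have hs0 : 0 ≤ s := hs.1.1
      have : s ∈ Metric.ball (0:ℝ) η := by
        simp [Real.dist_eq, abs_of_nonneg hs0]; linarith
      exact hs.2 (hball this)
    have : η ≤ t := le_csInf hSne this
    linarith
  -- c t ∉ Ω
  have hctnot : c t ∉ Ω := by
    intro hct
    have htpre : t ∈ c ⁻¹' Ω := hct
    obtain ⟨η', hη', hball'⟩ := Metric.isOpen_iff.1 hpre t htpre
    obtain ⟨s, hsS, hs_lt⟩ : ∃ s ∈ S, s < t + η' := by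
      by_contra hcon
      push_neg at hcon
      have : t + η' ≤ t := le_csInf hSne hcon
      linarith
    have hts : t ≤ s := ht_mem_lb s hsS
    have : s ∈ Metric.ball t η' := by
      rw [Metric.mem_ball, Real.dist_eq, abs_of_nonneg (sub_nonneg.mpr hts)]
      linarith
    exact hsS.2 (hball' this)
  -- c t ∈ closure Ω
  have hclos : c t ∈ closure Ω := by
    have hseq : Filter.Tendsto (fun k : ℕ => c (t * (k / (k+1)))) Filter.atTop (𝓝 (c t)) := by
      apply hcont.continuousAt.tendsto.comp
      have h1 : Filter.Tendsto (fun k : ℕ => (k : ℝ) / (k+1)) Filter.atTop (𝓝 1) :=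
        tendsto_natCast_div_add_atTop 1
      have := h1.const_mul t
      simpa using this
    apply mem_closure_of_tendsto hseq
    apply Filter.Eventually.of_forall
    intro k
    apply hbefore
    · positivity
    · have hk : (k : ℝ) / (k+1) < 1 := by
        rw [div_lt_one (by positivity)]
        linarith
      calc t * ((k:ℝ) / (k+1)) < t * 1 := by
            apply mul_lt_mul_of_pos_left hk htpos
        _ = t := mul_one t
  refine ⟨t, ⟨htpos, ht_le⟩, ?_, hbefore⟩
  rw [hΩ.frontier_eq]
  exact ⟨hclos, hctnot⟩

end dFBasic

section Bipolar

variable {F : En n → ℝ} {a b : ℝ}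

theorem euler_identity (hFhom : ∀ (t : ℝ) (ξ : En n), F (t • ξ) = |t| * F ξ)
    {g : En n} (hd : DifferentiableAt ℝ F g) : ⟪gradient F g, g⟫ = F g := by
  have hline : HasDerivAt (fun t : ℝ => t • g) ((1:ℝ) • g) 1 :=
    (hasDerivAt_id (1:ℝ)).smul_const g
  have hF' : HasFDerivAt F (fderiv ℝ F g) ((fun t : ℝ => t • g) 1) := by
    simpa using hd.hasFDerivAt
  have hchain : HasDerivAt (fun t : ℝ => F (t • g)) (fderiv ℝ F g ((1:ℝ) • g)) 1 :=
    hF'.comp_hasDerivAt 1 hline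
  have heq : (fun t : ℝ => F (t • g)) =ᶠ[𝓝 (1:ℝ)] fun t : ℝ => t * F g := by
    filter_upwards [eventually_gt_nhds (zero_lt_one)] with t ht
    rw [hFhom t g, abs_of_pos ht]
  have hlin : HasDerivAt (fun t : ℝ => t * F g) (F g) 1 := by
    simpa using (hasDerivAt_id (1:ℝ)).mul_const (F g)
  have hchain' : HasDerivAt (fun t : ℝ => t * F g) (fderiv ℝ F g ((1:ℝ) • g)) 1 :=
    hchain.congr_of_eventuallyEq heq.symm
  have huniq : fderiv ℝ F g ((1:ℝ) • g) = F g := hchain'.unique hlin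
  have hgrad : ⟪gradient F g, g⟫ = fderiv ℝ F g g := InnerProductSpace.toDual_symm_apply
  rw [hgrad, ← huniq, one_smul]

theorem subgrad_le (hFconv : ConvexOn ℝ Set.univ F)
    {g : En n} (hd : DifferentiableAt ℝ F g) (η : En n) :
    F g + ⟪gradient F g, η - g⟫ ≤ F η := by
  have hψconv : ConvexOn ℝ Set.univ (fun t : ℝ => F (g + t • (η - g))) := by
    have hA := hFconv.comp_affineMap (AffineMap.lineMap g η : ℝ →ᵃ[ℝ] En n)
    have : ∀ t : ℝ, (AffineMap.lineMap g η : ℝ →ᵃ[ℝ] En n) t = g + t • (η - g) := by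
      intro t
      simp [AffineMap.lineMap_apply, vsub_eq_sub, vadd_eq_add]
      abel
    have h2 : (F ∘ (AffineMap.lineMap g η : ℝ →ᵃ[ℝ] En n)) = fun t : ℝ => F (g + t • (η - g)) := by
      funext t; simp [Function.comp_apply, this t]
    rw [h2] at hA
    simpa [Set.preimage_univ] using hA
  have hline : HasDerivAt (fun t : ℝ => g + t • (η - g)) ((1:ℝ) • (η - g)) 0 :=
    ((hasDerivAt_id (0:ℝ)).smul_const (η - g)).const_add g
  have hF' : HasFDerivAt F (fderiv ℝ F g) ((fun t : ℝ => g + t • (η - g)) 0) := by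
    simpa using hd.hasFDerivAt
  have hψ' : HasDerivAt (fun t : ℝ => F (g + t • (η - g))) (fderiv ℝ F g ((1:ℝ) • (η - g))) 0 :=
    hF'.comp_hasDerivAt 0 hline
  have hslope := hψconv.le_slope_of_hasDerivAt (Set.mem_univ (0:ℝ)) (Set.mem_univ (1:ℝ))
    zero_lt_one hψ'
  rw [slope_def_field] at hslope
  simp only [zero_smul, add_zero, one_smul] at hslope hψ'
  have hgrad : ⟪gradient F g, η - g⟫ = fderiv ℝ F g (η - g) := InnerProductSpace.toDual_symm_apply
  rw [hgrad]
  have h2 : F (g + (η - g)) = F η := by congr 1; abel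
  rw [h2] at hslope
  have h3 : (F η - F g) / (1 - 0) = F η - F g := by norm_num
  rw [h3] at hslope
  linarith

theorem F_le_one_of_inner_le (hn : 2 ≤ n)
    (hFhom : ∀ (t : ℝ) (ξ : En n), F (t • ξ) = |t| * F ξ)
    (hFconv : ConvexOn ℝ Set.univ F)
    (hFlow : ∀ ξ : En n, a * ‖ξ‖ ≤ F ξ) (ha : 0 < a)
    (hFC2 : ContDiffOn ℝ 2 F {(0 : En n)}ᶜ) {g : En n}
    (hinner : ∀ w : En n, ⟪g, w⟫ ≤ polar F w) : F g ≤ 1 := by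
  rcases eq_or_ne g 0 with rfl | hg
  · rw [F_zero hFhom]; norm_num
  · have hd : DifferentiableAt ℝ F g := by
      have hopen : IsOpen ({(0 : En n)}ᶜ) := isOpen_compl_singleton
      exact (hFC2.contDiffAt (hopen.mem_nhds hg)).differentiableAt (by norm_num)
    have h1 : ∀ η : En n, ⟪gradient F g, η⟫ ≤ F η := by
      intro η
      have hsub := subgrad_le hFconv hd η
      have heuler := euler_identity hFhom hd
      have hsplit : ⟪gradient F g, η - g⟫ = ⟪gradient F g, η⟫ - ⟪gradient F g, g⟫ :=
        inner_sub_right _ _ _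
      rw [hsplit, heuler] at hsub
      linarith
    have h2 : polar F (gradient F g) ≤ 1 := by
      apply csSup_le (polar_set_nonempty hn _)
      rintro r ⟨ξ, hξ, rfl⟩
      rw [div_le_one (F_pos hFlow ha hξ)]
      rw [real_inner_comm]
      exact h1 ξ
    have h3 : F g = ⟪g, gradient F g⟫ := by
      rw [real_inner_comm]
      exact (euler_identity hFhom hd).symm
    rw [h3]
    exact (hinner _).trans h2

end Bipolar

section OneDim

/-- Average of g over [x, x+1/(N+1)] scaled tends to g x. -/
theorem avg_tendsto {g : ℝ → ℝ} {K : NNReal} (hg : LipschitzWith K g) (x : ℝ) :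
    Filter.Tendsto (fun N : ℕ => ((N:ℝ)+1) * ∫ t in x..(x + 1/((N:ℝ)+1)), g t)
      Filter.atTop (𝓝 (g x)) := by
  have hgc : Continuous g := hg.continuous
  have hK : ∀ s t : ℝ, |g s - g t| ≤ (K:ℝ) * |s - t| := by
    intro s t
    have := hg.dist_le_mul s t
    rwa [Real.dist_eq, Real.dist_eq] at this
  have key : ∀ N : ℕ, |((N:ℝ)+1) * (∫ t in x..(x + 1/((N:ℝ)+1)), g t) - g x|
      ≤ (K:ℝ) * (1/((N:ℝ)+1)) := by
    intro N
    set h : ℝ := 1/((N:ℝ)+1) with hh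
    have hpos : 0 < h := by positivity
    have hint1 : IntervalIntegrable g volume x (x+h) := hgc.intervalIntegrable _ _
    have hint2 : IntervalIntegrable (fun _ : ℝ => g x) volume x (x+h) :=
      intervalIntegrable_const
    have hconst : (∫ _ in x..(x+h), g x) = h * g x := by
      rw [intervalIntegral.integral_const]
      simp [smul_eq_mul]
    have hsplit : (∫ t in x..(x+h), g t) - h * g x = ∫ t in x..(x+h), (g t - g x) := by
      rw [intervalIntegral.integral_sub hint1 hint2, hconst]
    have hbnd : ∀ t ∈ Set.uIoc x (x+h), ‖g t - g x‖ ≤ (K:ℝ) * h := by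
      intro t ht
      rw [Set.uIoc_of_le (by linarith)] at ht
      have h1 : |t - x| ≤ h := by
        rw [abs_of_nonneg (by linarith [ht.1.le])]
        linarith [ht.2]
      calc ‖g t - g x‖ = |g t - g x| := rfl
        _ ≤ (K:ℝ) * |t - x| := hK t x
        _ ≤ (K:ℝ) * h := mul_le_mul_of_nonneg_left h1 K.coe_nonneg
    have hnorm : |∫ t in x..(x+h), (g t - g x)| ≤ ((K:ℝ) * h) * |x + h - x| :=
      intervalIntegral.norm_integral_le_of_norm_le_const hbnd
    have habs : |x + h - x| = h := by rw [add_sub_cancel_left, abs_of_pos hpos]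
    rw [habs] at hnorm
    have hNh : ((N:ℝ)+1) * h = 1 := by
      rw [hh]; field_simp
    calc |((N:ℝ)+1) * (∫ t in x..(x+h), g t) - g x|
        = |((N:ℝ)+1) * ((∫ t in x..(x+h), g t) - h * g x)| := by
          rw [mul_sub, show ((N:ℝ)+1) * (h * g x) = g x by rw [← mul_assoc, hNh, one_mul]]
      _ = ((N:ℝ)+1) * |(∫ t in x..(x+h), g t) - h * g x| := by
          rw [abs_mul, abs_of_pos (by positivity)]
      _ = ((N:ℝ)+1) * |∫ t in x..(x+h), (g t - g x)| := by rw [hsplit]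
      _ ≤ ((N:ℝ)+1) * (((K:ℝ) * h) * h) := by
          apply mul_le_mul_of_nonneg_left hnorm (by positivity)
      _ = (K:ℝ) * h * (((N:ℝ)+1) * h) := by ring
      _ = (K:ℝ) * h := by rw [hNh, mul_one]
  have hlim0 : Filter.Tendsto (fun N : ℕ => (K:ℝ) * (1/((N:ℝ)+1)))
      Filter.atTop (𝓝 0) := by
    have := tendsto_one_div_add_atTop_nhds_zero_nat.const_mul (K:ℝ)
    simpa using this
  have hsq : Filter.Tendsto
      (fun N : ℕ => ((N:ℝ)+1) * (∫ t in x..(x + 1/((N:ℝ)+1)), g t) - g x)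
      Filter.atTop (𝓝 0) :=
    squeeze_zero_norm key hlim0
  have h2 := hsq.add_const (g x)
  simpa using h2

/-- If `g` is Lipschitz and a.e. on `(0,1]` has a derivative bounded by `C`,
then `g 1 - g 0 ≤ C`. -/
theorem lip_sub_le_of_ae_deriv {g : ℝ → ℝ} {K : NNReal} (hg : LipschitzWith K g) {C : ℝ}
    (h : ∀ᵐ t : ℝ, t ∈ Set.Ioc (0:ℝ) 1 → ∃ d : ℝ, HasDerivAt g d t ∧ d ≤ C) :
    g 1 - g 0 ≤ C := by
  have hgc : Continuous g := hg.continuous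
  have hK : ∀ s t : ℝ, |g s - g t| ≤ (K:ℝ) * |s - t| := by
    intro s t
    have := hg.dist_le_mul s t
    rwa [Real.dist_eq, Real.dist_eq] at this
  set f : ℕ → ℝ → ℝ := fun N t => ((N:ℝ)+1) * (g (t + 1/((N:ℝ)+1)) - g t) with hf
  have hderiv_bound : ∀ t : ℝ, |deriv g t| ≤ (K:ℝ) := by
    intro t
    by_cases hd : DifferentiableAt ℝ g t
    · have h1 : deriv g t = fderiv ℝ g t 1 := fderiv_apply_one_eq_deriv.symm
      rw [h1]
      calc |fderiv ℝ g t 1| = ‖fderiv ℝ g t 1‖ := rfl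
        _ ≤ ‖fderiv ℝ g t‖ * ‖(1:ℝ)‖ := (fderiv ℝ g t).le_opNorm 1
        _ ≤ (K:ℝ) * 1 :=
            mul_le_mul (norm_fderiv_le_of_lipschitz ℝ hg) (by norm_num)
              (norm_nonneg _) K.coe_nonneg
        _ = (K:ℝ) := mul_one _
    · rw [deriv_zero_of_not_differentiableAt hd]
      simpa using K.coe_nonneg
  have hderiv_int : IntervalIntegrable (deriv g) volume 0 1 := by
    rw [intervalIntegrable_iff_integrableOn_Ioc_of_le zero_le_one]
    apply Integrable.mono' (integrable_const (K:ℝ))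
    · exact (measurable_deriv g).aestronglyMeasurable.restrict
    · exact Filter.Eventually.of_forall fun t => hderiv_bound t
  -- a.e. convergence on Ioc 0 1
  have hconv : ∀ᵐ t ∂(volume.restrict (Set.Ioc (0:ℝ) 1)),
      Filter.Tendsto (fun N => f N t) Filter.atTop (𝓝 (deriv g t)) := by
    filter_upwards [ae_restrict_of_ae h, ae_restrict_mem measurableSet_Ioc] with t ht htmem
    obtain ⟨d, hd, _⟩ := ht htmem
    rw [hd.deriv]
    have hslope := hasDerivAt_iff_tendsto_slope.1 hd
    have hseq : Filter.Tendsto (fun N : ℕ => t + 1/((N:ℝ)+1)) Filter.atTop (𝓝[≠] t) := by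
      rw [tendsto_nhdsWithin_iff]
      constructor
      · have := tendsto_one_div_add_atTop_nhds_zero_nat.const_add t
        simpa using this
      · apply Filter.Eventually.of_forall
        intro N
        have : (0:ℝ) < 1/((N:ℝ)+1) := by positivity
        simp only [Set.mem_compl_iff, Set.mem_singleton_iff]
        intro hcon
        nlinarith [hcon]
    have hcomp := hslope.comp hseq
    convert hcomp using 2 with N
    rw [Function.comp_apply, slope_def_field]
    rw [add_sub_cancel_left]
    rw [div_eq_mul_inv, one_div, inv_inv, mul_comm]
    simp [hf, one_div]
  -- uniform bound
  have hbound : ∀ N : ℕ, ∀ᵐ t ∂(volume.restrict (Set.Ioc (0:ℝ) 1)), ‖f N t‖ ≤ (K:ℝ) := by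
    intro N
    apply Filter.Eventually.of_forall
    intro t
    have hpos : (0:ℝ) < 1/((N:ℝ)+1) := by positivity
    calc ‖f N t‖ = ((N:ℝ)+1) * |g (t + 1/((N:ℝ)+1)) - g t| := by
          rw [hf]
          simp only [norm_mul, Real.norm_eq_abs]
          rw [abs_of_pos (by positivity : (0:ℝ) < (N:ℝ)+1)]
      _ ≤ ((N:ℝ)+1) * ((K:ℝ) * |t + 1/((N:ℝ)+1) - t|) := by
          apply mul_le_mul_of_nonneg_left (hK _ _) (by positivity)
      _ = (K:ℝ) := by
          rw [add_sub_cancel_left, abs_of_pos hpos]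
          field_simp
  -- dominated convergence
  have hDCT := MeasureTheory.tendsto_integral_of_dominated_convergence
    (μ := volume.restrict (Set.Ioc (0:ℝ) 1)) (F := f) (f := deriv g)
    (bound := fun _ => (K:ℝ))
    (fun N => (continuous_const.mul
      ((hgc.comp (continuous_add_right _)).sub hgc)).aestronglyMeasurable.restrict)
    (integrable_const _) hbound hconv
  -- compute the integrals of f N
  have hJ : ∀ N : ℕ, (∫ t in Set.Ioc (0:ℝ) 1, f N t)
      = ((N:ℝ)+1) * ((∫ t in (1:ℝ)..(1 + 1/((N:ℝ)+1)), g t)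
        - ∫ t in (0:ℝ)..(1/((N:ℝ)+1)), g t) := by
    intro N
    set hh : ℝ := 1/((N:ℝ)+1) with hhdef
    have hpos : 0 < hh := by positivity
    have hIoc : (∫ t in Set.Ioc (0:ℝ) 1, f N t) = ∫ t in (0:ℝ)..1, f N t :=
      (intervalIntegral.integral_of_le zero_le_one).symm
    rw [hIoc]
    have hint1 : IntervalIntegrable (fun t => g (t + hh)) volume 0 1 :=
      (hgc.comp (continuous_add_right hh)).intervalIntegrable _ _
    have hint2 : IntervalIntegrable g volume 0 1 := hgc.intervalIntegrable _ _
    have e1 : (∫ t in (0:ℝ)..1, f N t)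
        = ((N:ℝ)+1) * ∫ t in (0:ℝ)..1, (g (t + hh) - g t) := by
      rw [hf]
      rw [← intervalIntegral.integral_const_mul]
    rw [e1, intervalIntegral.integral_sub hint1 hint2]
    have e2 : (∫ t in (0:ℝ)..1, g (t + hh)) = ∫ t in hh..(1+hh), g t := by
      have := intervalIntegral.integral_comp_add_right (a := (0:ℝ)) (b := 1) g hh
      rw [this, zero_add]
    rw [e2]
    have adj1 : (∫ t in hh..(1:ℝ), g t) + (∫ t in (1:ℝ)..(1+hh), g t)
        = ∫ t in hh..(1+hh), g t :=
      intervalIntegral.integral_add_adjacent_intervals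
        (hgc.intervalIntegrable _ _) (hgc.intervalIntegrable _ _)
    have adj2 : (∫ t in (0:ℝ)..hh, g t) + (∫ t in hh..(1:ℝ), g t)
        = ∫ t in (0:ℝ)..1, g t :=
      intervalIntegral.integral_add_adjacent_intervals
        (hgc.intervalIntegrable _ _) (hgc.intervalIntegrable _ _)
    rw [← adj1, ← adj2]
    ring
  -- the limit of the integrals is g 1 - g 0
  have hA := avg_tendsto hg 1
  have hB := avg_tendsto hg 0
  have hJlim : Filter.Tendsto (fun N => ∫ t in Set.Ioc (0:ℝ) 1, f N t)
      Filter.atTop (𝓝 (g 1 - g 0)) := by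
    have : (fun N => ∫ t in Set.Ioc (0:ℝ) 1, f N t)
        = fun N : ℕ => (((N:ℝ)+1) * ∫ t in (1:ℝ)..(1 + 1/((N:ℝ)+1)), g t)
          - (((N:ℝ)+1) * ∫ t in (0:ℝ)..((0:ℝ) + 1/((N:ℝ)+1)), g t) := by
      funext N
      rw [hJ N]
      rw [zero_add]
      ring
    rw [this]
    exact hA.sub hB
  have huniq : (∫ t in Set.Ioc (0:ℝ) 1, deriv g t) = g 1 - g 0 :=
    tendsto_nhds_unique hDCT hJlim
  -- conclude
  have hmono : (∫ t in Set.Ioc (0:ℝ) 1, deriv g t) ≤ ∫ t in Set.Ioc (0:ℝ) 1, (C:ℝ) := by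
    apply setIntegral_mono_ae_restrict
    · rw [← intervalIntegrable_iff_integrableOn_Ioc_of_le zero_le_one]
      exact hderiv_int
    · exact integrableOn_const (by simp) (by simp)
    · filter_upwards [ae_restrict_of_ae h, ae_restrict_mem measurableSet_Ioc] with t ht htmem
      obtain ⟨d, hd, hdC⟩ := ht htmem
      rw [hd.deriv]
      exact hdC
  have hCint : (∫ _ in Set.Ioc (0:ℝ) 1, (C:ℝ)) = C := by
    rw [setIntegral_const]
    simp
  rw [huniq] at hmono
  rw [hCint] at hmono
  exact hmono

end OneDim

section Fubini

/-- If `N` is null, then for a.e. `w` the line `w + t v` misses `N` for a.e. `t`. -/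
theorem ae_line_misses {N : Set (En n)} (hN : volume N = 0) (v : En n) :
    ∀ᵐ w : En n, ∀ᵐ t : ℝ, w + t • v ∉ N := by
  set N' := toMeasurable volume N with hN'def
  have hN'meas : MeasurableSet N' := measurableSet_toMeasurable _ _
  have hN'null : volume N' = 0 := by rw [measure_toMeasurable]; exact hN
  have hsub : N ⊆ N' := subset_toMeasurable _ _
  set S : Set (En n × ℝ) := {p | p.1 + p.2 • v ∈ N'} with hSdef
  have hScont : Continuous fun p : En n × ℝ => p.1 + p.2 • v := by
    exact continuous_fst.add (continuous_snd.smul continuous_const)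
  have hSmeas : MeasurableSet S := hScont.measurable hN'meas
  have hSnull : (volume : Measure (En n)).prod (volume : Measure ℝ) S = 0 := by
    rw [MeasureTheory.Measure.prod_apply_symm hSmeas]
    have : ∀ t : ℝ, volume ((fun w : En n => (w, t)) ⁻¹' S) = 0 := by
      intro t
      have : ((fun w : En n => (w, t)) ⁻¹' S) = (fun w : En n => w + t • v) ⁻¹' N' := rfl
      rw [this]
      rw [measure_preimage_add_right]
      exact hN'null
    simp only [this]
    simp
  have := MeasureTheory.Measure.measure_ae_null_of_prod_null hSnull
  filter_upwards [this] with w hw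
  have hw' : volume ((fun t : ℝ => (w, t)) ⁻¹' S) = 0 := hw
  have h2 : ∀ᵐ t : ℝ, t ∉ ((fun t : ℝ => (w, t)) ⁻¹' S) :=
    measure_eq_zero_iff_ae_notMem.mp hw'
  filter_upwards [h2] with t ht
  exact fun hmem => ht (hsub hmem)

end Fubini

section SegBound

variable {F : En n → ℝ} {a b : ℝ}

theorem line_lipschitz (w v : En n) : LipschitzWith ‖v‖₊ (fun t : ℝ => w + t • v) := by
  apply LipschitzWith.of_dist_le_mul
  intro s t
  simp only [dist_eq_norm]
  have : w + s • v - (w + t • v) = (s - t) • v := by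
    rw [sub_smul]; abel
  rw [this, norm_smul, mul_comm]
  rfl

theorem seg_bound (hn : 2 ≤ n)
    (hF0 : ∀ ξ : En n, 0 ≤ F ξ)
    (hFhom : ∀ (t : ℝ) (ξ : En n), F (t • ξ) = |t| * F ξ)
    (hFlow : ∀ ξ : En n, a * ‖ξ‖ ≤ F ξ) (ha : 0 < a)
    {φ : En n → ℝ} {K : NNReal} (hφ : LipschitzWith K φ)
    {Ω : Set (En n)} (hΩ : IsOpen Ω) {L : ℝ} (hL : 0 ≤ L)
    (hae : ∀ᵐ x : En n, x ∈ Ω → (DifferentiableAt ℝ φ x ∧ F (gradient φ x) ≤ L))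
    {p q : En n} (hseg : ∀ t ∈ Set.Icc (0:ℝ) 1, p + t • (q - p) ∈ Ω) :
    |φ q - φ p| ≤ L * polar F (q - p) := by
  set v : En n := q - p with hv
  set C : ℝ := L * polar F v with hC
  -- compact segment inside Ω, get thickening
  have hsegcompact : IsCompact ((fun t : ℝ => p + t • v) '' Set.Icc 0 1) := by
    apply IsCompact.image isCompact_Icc
    exact continuous_const.add (continuous_id.smul continuous_const)
  have hsegsub : ((fun t : ℝ => p + t • v) '' Set.Icc 0 1) ⊆ Ω := by
    rintro _ ⟨t, ht, rfl⟩
    exact hseg t ht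
  obtain ⟨δ, hδ, hthick⟩ := hsegcompact.exists_thickening_subset_open hΩ hsegsub
  -- the null bad set
  set N : Set (En n) := {x | ¬ (x ∈ Ω → (DifferentiableAt ℝ φ x ∧ F (gradient φ x) ≤ L))}
    with hN
  have hNnull : volume N = 0 := ae_iff.1 hae
  have hlines := ae_line_misses hNnull v
  -- good points
  have hgood : ∀ w : En n, (∀ᵐ t : ℝ, w + t • v ∉ N) → w ∈ Metric.ball p δ →
      |φ (w + v) - φ w| ≤ C := by
    intro w hw hwball
    have hwseg : ∀ t ∈ Set.Icc (0:ℝ) 1, w + t • v ∈ Ω := by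
      intro t ht
      apply hthick
      rw [Metric.mem_thickening_iff]
      refine ⟨p + t • v, ⟨t, ht, rfl⟩, ?_⟩
      have h48 : w + t • v - (p + t • v) = w - p := by abel
      rw [dist_eq_norm, h48, ← dist_eq_norm]
      exact hwball
    -- 1D functions
    set g : ℝ → ℝ := fun t => φ (w + t • v) with hg
    have hglip : LipschitzWith (K * ‖v‖₊) g := hφ.comp (line_lipschitz w v)
    have hkey : ∀ᵐ t : ℝ, t ∈ Set.Ioc (0:ℝ) 1 →
        ∃ d : ℝ, HasDerivAt g d t ∧ d ≤ C ∧ -d ≤ C := by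
      filter_upwards [hw] with t ht htIoc
      have hxΩ : w + t • v ∈ Ω := hwseg t ⟨htIoc.1.le, htIoc.2⟩
      have hx : DifferentiableAt ℝ φ (w + t • v) ∧ F (gradient φ (w + t • v)) ≤ L := by
        by_contra hcon
        exact ht (fun _ => by tauto)
      obtain ⟨hdiff, hFle⟩ := hx
      set x := w + t • v
      have hline : HasDerivAt (fun s : ℝ => w + s • v) ((1:ℝ) • v) t :=
        ((hasDerivAt_id t).smul_const v).const_add w
      have hF' : HasFDerivAt φ (fderiv ℝ φ x) ((fun s : ℝ => w + s • v) t) := hdiff.hasFDerivAt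
      have hchain : HasDerivAt g (fderiv ℝ φ x ((1:ℝ) • v)) t := hF'.comp_hasDerivAt t hline
      have hinner : fderiv ℝ φ x ((1:ℝ) • v) = ⟪gradient φ x, v⟫ := by
        rw [one_smul]
        exact (InnerProductSpace.toDual_symm_apply).symm
      refine ⟨⟪gradient φ x, v⟫, by rwa [hinner] at hchain, ?_, ?_⟩
      · calc ⟪gradient φ x, v⟫ ≤ F (gradient φ x) * polar F v :=
              inner_le_F_mul_polar hFhom hFlow ha _ _
          _ ≤ L * polar F v :=
              mul_le_mul_of_nonneg_right hFle (polar_nonneg hn hFlow ha v)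
      · have h1 : -⟪gradient φ x, v⟫ = ⟪gradient φ x, -v⟫ := (inner_neg_right _ _).symm
        rw [h1]
        calc ⟪gradient φ x, -v⟫ ≤ F (gradient φ x) * polar F (-v) :=
              inner_le_F_mul_polar hFhom hFlow ha _ _
          _ = F (gradient φ x) * polar F v := by rw [polar_neg hFhom]
          _ ≤ L * polar F v :=
              mul_le_mul_of_nonneg_right hFle (polar_nonneg hn hFlow ha v)
    have hub : g 1 - g 0 ≤ C := by
      apply lip_sub_le_of_ae_deriv hglip
      filter_upwards [hkey] with t ht htIoc
      obtain ⟨d, hd, hdC, _⟩ := ht htIoc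
      exact ⟨d, hd, hdC⟩
    have hlb : -(g 1 - g 0) ≤ C := by
      have hneg : LipschitzWith (K * ‖v‖₊) (fun t => -(g t)) := hglip.neg
      have := lip_sub_le_of_ae_deriv hneg (C := C) ?_
      · linarith
      · filter_upwards [hkey] with t ht htIoc
        obtain ⟨d, hd, _, hdC⟩ := ht htIoc
        exact ⟨-d, hd.neg, hdC⟩
    have hg1 : g 1 = φ (w + v) := by rw [hg]; simp
    have hg0 : g 0 = φ w := by rw [hg]; simp
    rw [abs_le]
    constructor <;> [linarith [hlb, hg1, hg0]; linarith [hub, hg1, hg0]]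
  -- approximate p by good points
  have hseqgood : ∀ k : ℕ, ∃ w, w ∈ Metric.ball p (min δ (1/((k:ℝ)+1))) ∧
      |φ (w + v) - φ w| ≤ C := by
    intro k
    by_contra hcon
    push_neg at hcon
    have hballpos : 0 < volume (Metric.ball p (min δ (1/((k:ℝ)+1)))) := by
      apply Metric.measure_ball_pos
      apply lt_min hδ
      positivity
    have hsubnull : Metric.ball p (min δ (1/((k:ℝ)+1)))
        ⊆ {w : En n | ¬ (∀ᵐ t : ℝ, w + t • v ∉ N)} := by
      intro w hwball
      by_contra hnot
      simp only [Set.mem_setOf_eq, not_not] at hnot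
      have hball2 : w ∈ Metric.ball p δ :=
        Metric.ball_subset_ball (min_le_left _ _) hwball
      exact absurd (hgood w hnot hball2) (not_le.mpr (hcon w hwball))
    have hnull2 : volume {w : En n | ¬ (∀ᵐ t : ℝ, w + t • v ∉ N)} = 0 := ae_iff.1 hlines
    have := measure_mono (μ := (volume : Measure (En n))) hsubnull
    rw [hnull2] at this
    exact absurd (le_antisymm this zero_le) (ne_of_gt hballpos)
  choose wseq hwball hwgood using hseqgood
  have hwtend : Filter.Tendsto wseq Filter.atTop (𝓝 p) := by
    rw [tendsto_iff_dist_tendsto_zero]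
    have hb : ∀ k : ℕ, dist (wseq k) p ≤ 1/((k:ℝ)+1) := fun k =>
      le_trans (le_of_lt (Metric.mem_ball.mp (hwball k))) (min_le_right _ _)
    exact squeeze_zero (fun k => dist_nonneg) hb tendsto_one_div_add_atTop_nhds_zero_nat
  have hAcont : Continuous (fun w : En n => |φ (w + v) - φ w|) := by
    apply Continuous.abs
    exact (hφ.continuous.comp (continuous_id.add continuous_const)).sub hφ.continuous
  have hlim : Filter.Tendsto (fun k => |φ (wseq k + v) - φ (wseq k)|) Filter.atTop
      (𝓝 (|φ (p + v) - φ p|)) := (hAcont.tendsto p).comp hwtend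
  have hfinal : |φ (p + v) - φ p| ≤ C :=
    le_of_tendsto hlim (Filter.Eventually.of_forall hwgood)
  have hpv : p + v = q := by rw [hv]; abel
  rw [hpv] at hfinal
  exact hfinal

end SegBound

section ValLe

variable {F : En n → ℝ} {a b : ℝ}

theorem val_le_of_ae (hn : 2 ≤ n)
    (hF0 : ∀ ξ : En n, 0 ≤ F ξ)
    (hFhom : ∀ (t : ℝ) (ξ : En n), F (t • ξ) = |t| * F ξ)
    (hFlow : ∀ ξ : En n, a * ‖ξ‖ ≤ F ξ) (ha : 0 < a)
    {φ : En n → ℝ} {K : NNReal} (hφ : LipschitzWith K φ)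
    {Ω : Set (En n)} (hΩ : IsOpen Ω) (hfr : (frontier Ω).Nonempty)
    (hvanish : ∀ x ∉ Ω, φ x = 0) {L : ℝ} (hL : 0 ≤ L)
    (hae : ∀ᵐ x : En n, x ∈ Ω → (DifferentiableAt ℝ φ x ∧ F (gradient φ x) ≤ L))
    {x : En n} (hx : x ∈ Ω) : |φ x| ≤ L * dF F Ω x := by
  have claim1 : ∀ y ∈ frontier Ω, |φ x| ≤ L * polar F (x - y) := by
    intro y hy
    have hynot : y ∉ Ω := by
      rw [hΩ.frontier_eq] at hy
      exact hy.2
    obtain ⟨t, htIoc, hzfr, hbefore⟩ := exists_exit hΩ hx hynot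
    -- sequence s_k = t * k/(k+1) converging to t from below
    set s : ℕ → ℝ := fun k => t * ((k:ℝ) / ((k:ℝ)+1)) with hs
    have hs_nonneg : ∀ k, 0 ≤ s k := by
      intro k
      apply mul_nonneg htIoc.1.le
      positivity
    have hs_lt : ∀ k, s k < t := by
      intro k
      have hk : (k:ℝ) / ((k:ℝ)+1) < 1 := by
        rw [div_lt_one (by positivity)]
        linarith
      calc t * ((k:ℝ) / ((k:ℝ)+1)) < t * 1 := mul_lt_mul_of_pos_left hk htIoc.1
        _ = t := mul_one t
    have hstend : Filter.Tendsto s Filter.atTop (𝓝 t) := by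
      have h1 : Filter.Tendsto (fun k : ℕ => (k:ℝ) / ((k:ℝ)+1)) Filter.atTop (𝓝 1) := by
        have := tendsto_natCast_div_add_atTop (𝕜 := ℝ) 1
        simpa using this
      have := h1.const_mul t
      simpa using this
    -- bound for each k via seg_bound
    have hbnd : ∀ k : ℕ, |φ (x + (s k) • (y - x)) - φ x| ≤ L * ((s k) * polar F (y - x)) := by
      intro k
      have hseg : ∀ u ∈ Set.Icc (0:ℝ) 1, x + u • ((x + (s k) • (y - x)) - x) ∈ Ω := by
        intro u hu
        have h1 : (x + (s k) • (y - x)) - x = (s k) • (y - x) := by abel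
        rw [h1, smul_smul]
        apply hbefore
        · exact mul_nonneg hu.1 (hs_nonneg k)
        · rcases eq_or_lt_of_le (hs_nonneg k) with heq | hpos
          · rw [← heq, mul_zero]; exact htIoc.1
          · calc u * s k ≤ 1 * s k := mul_le_mul_of_nonneg_right hu.2 (hs_nonneg k)
              _ = s k := one_mul _
              _ < t := hs_lt k
      have := seg_bound hn hF0 hFhom hFlow ha hφ hΩ hL hae hseg
      have h2 : (x + (s k) • (y - x)) - x = (s k) • (y - x) := by abel
      rw [h2] at this
      rwa [polar_smul hn hFlow ha (hs_nonneg k)] at this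
    -- limits
    have hzval : φ (x + t • (y - x)) = 0 := by
      apply hvanish
      rw [hΩ.frontier_eq] at hzfr
      exact hzfr.2
    have hlhs : Filter.Tendsto (fun k => |φ (x + (s k) • (y - x)) - φ x|) Filter.atTop
        (𝓝 (|φ (x + t • (y - x)) - φ x|)) := by
      have hc : Continuous (fun u : ℝ => |φ (x + u • (y - x)) - φ x|) := by
        apply Continuous.abs
        exact (hφ.continuous.comp (continuous_const.add
          (continuous_id.smul continuous_const))).sub continuous_const
      exact (hc.tendsto t).comp hstend
    have hrhs : Filter.Tendsto (fun k => L * ((s k) * polar F (y - x))) Filter.atTop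
        (𝓝 (L * (t * polar F (y - x)))) := by
      exact ((hstend.mul_const (polar F (y - x))).const_mul L)
    have hle : |φ (x + t • (y - x)) - φ x| ≤ L * (t * polar F (y - x)) :=
      le_of_tendsto_of_tendsto' hlhs hrhs hbnd
    rw [hzval] at hle
    rw [abs_sub_comm, sub_zero] at hle
    have hpolneg : polar F (y - x) = polar F (x - y) := by
      rw [show y - x = -(x - y) by abel, polar_neg hFhom]
    rw [hpolneg] at hle
    calc |φ x| ≤ L * (t * polar F (x - y)) := hle
      _ ≤ L * (1 * polar F (x - y)) := by
          apply mul_le_mul_of_nonneg_left _ hL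
          exact mul_le_mul_of_nonneg_right htIoc.2 (polar_nonneg hn hFlow ha _)
      _ = L * polar F (x - y) := by rw [one_mul]
  rcases eq_or_lt_of_le hL with rfl | hLpos
  · obtain ⟨y, hy⟩ := hfr
    have := claim1 y hy
    simpa using this
  · have h1 : |φ x| / L ≤ dF F Ω x := by
      apply le_dF hfr
      intro y hy
      rw [div_le_iff₀ hLpos]
      rw [mul_comm]
      exact claim1 y hy
    calc |φ x| = L * (|φ x| / L) := by field_simp
      _ ≤ L * dF F Ω x := mul_le_mul_of_nonneg_left h1 hLpos.le

theorem main_ineq (hn : 2 ≤ n)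
    (hF0 : ∀ ξ : En n, 0 ≤ F ξ)
    (hFhom : ∀ (t : ℝ) (ξ : En n), F (t • ξ) = |t| * F ξ)
    (ha : 0 < a) (hab : a ≤ b)
    (hFlow : ∀ ξ : En n, a * ‖ξ‖ ≤ F ξ) (hFup : ∀ ξ : En n, F ξ ≤ b * ‖ξ‖)
    {Ω : Set (En n)} (hΩo : IsOpen Ω) (hne : Ω.Nonempty) (hfr : (frontier Ω).Nonempty)
    {φ : En n → ℝ} {K : NNReal} (hφ : LipschitzWith K φ)
    (hvanish : ∀ x ∉ Ω, φ x = 0) {x : En n} (hx : x ∈ Ω) :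
    |φ x| ≤ essSup (fun y => F (gradient φ y)) (volume.restrict Ω) * dF F Ω x := by
  set μ := volume.restrict Ω with hμ
  haveI : (ae μ).NeBot := by
    rw [ae_neBot]
    intro hzero
    have := hΩo.measure_pos (volume : Measure (En n)) hne
    rw [hμ] at hzero
    have h2 : volume Ω = 0 := by
      have := congrArg (fun m : Measure (En n) => m Set.univ) hzero
      simpa [Measure.restrict_apply_univ] using this
    rw [h2] at this
    exact lt_irrefl 0 this
  have hb0 : 0 ≤ b := le_trans ha.le hab
  have hbd : ∀ y : En n, F (gradient φ y) ≤ b * K := by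
    intro y
    calc F (gradient φ y) ≤ b * ‖gradient φ y‖ := hFup _
      _ ≤ b * K := by
          apply mul_le_mul_of_nonneg_left _ hb0
          have h1 : ‖gradient φ y‖ = ‖fderiv ℝ φ y‖ := by
            rw [gradient]
            exact LinearIsometryEquiv.norm_map _ _
          rw [h1]
          exact norm_fderiv_le_of_lipschitz ℝ hφ
  have hbdd : Filter.IsBoundedUnder (· ≤ ·) (ae μ) (fun y => F (gradient φ y)) :=
    ⟨b * K, Filter.eventually_map.2 (Filter.Eventually.of_forall hbd)⟩
  set L := essSup (fun y => F (gradient φ y)) μ with hL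
  have hL0 : 0 ≤ L := by
    apply Filter.le_limsup_of_frequently_le _ hbdd
    exact Filter.Frequently.of_forall (fun y => hF0 _)
  have hae1 : ∀ᵐ y ∂μ, F (gradient φ y) ≤ L := ae_le_essSup hbdd
  have hae2 : ∀ᵐ y : En n, y ∈ Ω → F (gradient φ y) ≤ L :=
    (ae_restrict_iff' hΩo.measurableSet).1 hae1
  have hrad : ∀ᵐ y : En n, DifferentiableAt ℝ φ y := hφ.ae_differentiableAt
  have hae : ∀ᵐ y : En n, y ∈ Ω → (DifferentiableAt ℝ φ y ∧ F (gradient φ y) ≤ L) := by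
    filter_upwards [hae2, hrad] with y h1 h2
    exact fun hy => ⟨h2, h1 hy⟩
  exact val_le_of_ae hn hF0 hFhom hFlow ha hφ hΩo hfr hvanish hL0 hae hx

end ValLe

section Dext

variable {F : En n → ℝ} {a b : ℝ} {Ω : Set (En n)}

theorem ite_dF_nonneg (hn : 2 ≤ n) (hFlow : ∀ ξ : En n, a * ‖ξ‖ ≤ F ξ) (ha : 0 < a)
    (x : En n) : 0 ≤ (if x ∈ Ω then dF F Ω x else 0) := by
  split
  · exact dF_nonneg hn hFlow ha x
  · exact le_refl 0

theorem dext_contract (hn : 2 ≤ n) (hFhom : ∀ (t : ℝ) (ξ : En n), F (t • ξ) = |t| * F ξ)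
    (hFlow : ∀ ξ : En n, a * ‖ξ‖ ≤ F ξ) (ha : 0 < a)
    (hΩo : IsOpen Ω) (hfr : (frontier Ω).Nonempty) (x y : En n) :
    (if x ∈ Ω then dF F Ω x else 0) - (if y ∈ Ω then dF F Ω y else 0) ≤ polar F (x - y) := by
  by_cases hx : x ∈ Ω
  · by_cases hy : y ∈ Ω
    · simp only [if_pos hx, if_pos hy]
      have := dF_sub_le hn hFlow ha hfr x y
      linarith
    · simp only [if_pos hx, if_neg hy]
      rw [sub_zero]
      obtain ⟨t, htIoc, hzfr, _⟩ := exists_exit hΩo hx hy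
      have h1 : dF F Ω x ≤ polar F (x - (x + t • (y - x))) := dF_le hn hFlow ha hzfr x
      have h2 : x - (x + t • (y - x)) = t • (x - y) := by
        rw [smul_sub, smul_sub]
        abel
      rw [h2, polar_smul hn hFlow ha htIoc.1.le] at h1
      calc dF F Ω x ≤ t * polar F (x - y) := h1
        _ ≤ 1 * polar F (x - y) :=
            mul_le_mul_of_nonneg_right htIoc.2 (polar_nonneg hn hFlow ha _)
        _ = polar F (x - y) := one_mul _
  · simp only [if_neg hx]
    rw [zero_sub, neg_le_iff_add_nonneg]
    apply add_nonneg (polar_nonneg hn hFlow ha _)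
    exact ite_dF_nonneg hn hFlow ha y

theorem dext_lipschitz (hn : 2 ≤ n) (hFhom : ∀ (t : ℝ) (ξ : En n), F (t • ξ) = |t| * F ξ)
    (hFlow : ∀ ξ : En n, a * ‖ξ‖ ≤ F ξ) (ha : 0 < a)
    (hΩo : IsOpen Ω) (hfr : (frontier Ω).Nonempty) :
    LipschitzWith (Real.toNNReal (1/a)) (fun x : En n => if x ∈ Ω then dF F Ω x else 0) := by
  apply LipschitzWith.of_dist_le_mul
  intro x y
  rw [Real.dist_eq, Real.coe_toNNReal _ (by positivity : (0:ℝ) ≤ 1/a)]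
  rw [abs_sub_le_iff]
  have key : ∀ u v : En n,
      (if u ∈ Ω then dF F Ω u else 0) - (if v ∈ Ω then dF F Ω v else 0) ≤ 1/a * dist u v := by
    intro u v
    calc (if u ∈ Ω then dF F Ω u else 0) - (if v ∈ Ω then dF F Ω v else 0)
        ≤ polar F (u - v) := dext_contract hn hFhom hFlow ha hΩo hfr u v
      _ ≤ ‖u - v‖ / a := polar_le hn hFlow ha _
      _ = 1/a * dist u v := by rw [dist_eq_norm]; ring
  exact ⟨key x y, by rw [dist_comm]; exact key y x⟩

theorem dext_grad_le_one (hn : 2 ≤ n)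
    (hFhom : ∀ (t : ℝ) (ξ : En n), F (t • ξ) = |t| * F ξ)
    (hFconv : ConvexOn ℝ Set.univ F)
    (hFlow : ∀ ξ : En n, a * ‖ξ‖ ≤ F ξ) (ha : 0 < a)
    (hFC2 : ContDiffOn ℝ 2 F {(0 : En n)}ᶜ)
    (hΩo : IsOpen Ω) (hfr : (frontier Ω).Nonempty) (x : En n) :
    F (gradient (fun y : En n => if y ∈ Ω then dF F Ω y else 0) x) ≤ 1 := by
  set dxt : En n → ℝ := fun y => if y ∈ Ω then dF F Ω y else 0 with hdxt
  by_cases hdiff : DifferentiableAt ℝ dxt x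
  · apply F_le_one_of_inner_le hn hFhom hFconv hFlow ha hFC2
    intro w
    -- derivative of t ↦ dxt (x + t w) at 0 is ⟪grad, w⟫, and slopes are ≤ polar F w
    have hline : HasDerivAt (fun t : ℝ => x + t • w) ((1:ℝ) • w) 0 :=
      ((hasDerivAt_id (0:ℝ)).smul_const w).const_add x
    have hF' : HasFDerivAt dxt (fderiv ℝ dxt x) ((fun t : ℝ => x + t • w) 0) := by
      simpa using hdiff.hasFDerivAt
    have hchain : HasDerivAt (fun t : ℝ => dxt (x + t • w)) (fderiv ℝ dxt x ((1:ℝ) • w)) 0 :=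
      by simpa only [Function.comp_def] using hF'.comp_hasDerivAt 0 hline
    have hinner : fderiv ℝ dxt x ((1:ℝ) • w) = ⟪gradient dxt x, w⟫ := by
      rw [one_smul]
      exact (InnerProductSpace.toDual_symm_apply).symm
    rw [hinner] at hchain
    have hslope := hasDerivAt_iff_tendsto_slope.1 hchain
    have hmono : (𝓝[>] (0:ℝ)) ≤ (𝓝[≠] (0:ℝ)) :=
      nhdsWithin_mono 0 (fun t ht => ne_of_gt ht)
    have hslope' := hslope.mono_left hmono
    apply le_of_tendsto hslope'
    filter_upwards [self_mem_nhdsWithin] with t (ht : (0:ℝ) < t)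
    rw [slope_def_field]
    have hnum : dxt (x + t • w) - dxt x ≤ t * polar F w := by
      have := dext_contract hn hFhom hFlow ha hΩo hfr (x + t • w) x
      have h2 : x + t • w - x = t • w := by abel
      rw [h2, polar_smul hn hFlow ha ht.le] at this
      exact this
    have hsimp : (fun t : ℝ => dxt (x + t • w)) t - (fun t : ℝ => dxt (x + t • w)) 0 = dxt (x + t • w) - dxt x := by
      simp
    rw [hsimp, sub_zero, div_le_iff₀ ht]
    rw [mul_comm (polar F w) t]
    exact hnum
  · rw [gradient_eq_zero_of_not_differentiableAt hdiff, F_zero hFhom]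
    norm_num

end Dext

section Rho

variable {F : En n → ℝ} {a b : ℝ} {Ω : Set (En n)}

theorem frontier_nonempty (hn : 2 ≤ n) (hΩb : Bornology.IsBounded Ω) (hne : Ω.Nonempty) :
    (frontier Ω).Nonempty := by
  rw [nonempty_frontier_iff]
  refine ⟨hne, ?_⟩
  intro huniv
  obtain ⟨R, hR⟩ := hΩb.subset_closedBall 0
  obtain ⟨ξ, hξ⟩ := exists_ne_zero hn
  have hξn : 0 < ‖ξ‖ := norm_pos_iff.mpr hξ
  set z : En n := ((|R|+1)/‖ξ‖) • ξ with hz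
  have hzn : ‖z‖ = |R| + 1 := by
    rw [hz, norm_smul, Real.norm_eq_abs, abs_of_pos (by positivity)]
    field_simp
  have hzmem : z ∈ Ω := by rw [huniv]; trivial
  have := hR hzmem
  rw [Metric.mem_closedBall, dist_zero_right, hzn] at this
  have : |R| + 1 ≤ |R| := le_trans this (le_abs_self R)
  linarith

theorem rho_bddAbove (hn : 2 ≤ n) (hFlow : ∀ ξ : En n, a * ‖ξ‖ ≤ F ξ) (ha : 0 < a)
    (hΩb : Bornology.IsBounded Ω) (hfr : (frontier Ω).Nonempty) :
    BddAbove { r : ℝ | ∃ x ∈ Ω, r = dF F Ω x } := by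
  obtain ⟨y₀, hy₀⟩ := hfr
  obtain ⟨R, hR⟩ := hΩb.subset_closedBall 0
  have hy₀R : ‖y₀‖ ≤ R := by
    have h1 : y₀ ∈ closure Ω := frontier_subset_closure hy₀
    have h2 : closure Ω ⊆ Metric.closedBall 0 R :=
      closure_minimal hR Metric.isClosed_closedBall
    have := h2 h1
    rwa [Metric.mem_closedBall, dist_zero_right] at this
  refine ⟨(R + R) / a, ?_⟩
  rintro r ⟨x, hx, rfl⟩
  have hxR : ‖x‖ ≤ R := by
    have := hR hx
    rwa [Metric.mem_closedBall, dist_zero_right] at this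
  calc dF F Ω x ≤ polar F (x - y₀) := dF_le hn hFlow ha hy₀ x
    _ ≤ ‖x - y₀‖ / a := polar_le hn hFlow ha _
    _ ≤ (R + R) / a := by
        gcongr
        exact le_trans (norm_sub_le x y₀) (add_le_add hxR hy₀R)

theorem dF_le_rho (hn : 2 ≤ n) (hFlow : ∀ ξ : En n, a * ‖ξ‖ ≤ F ξ) (ha : 0 < a)
    (hΩb : Bornology.IsBounded Ω) (hfr : (frontier Ω).Nonempty)
    {x : En n} (hx : x ∈ Ω) : dF F Ω x ≤ rhoF F Ω :=
  le_csSup (rho_bddAbove hn hFlow ha hΩb hfr) ⟨x, hx, rfl⟩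

theorem dF_pos (hn : 2 ≤ n) (hFlow : ∀ ξ : En n, a * ‖ξ‖ ≤ F ξ)
    (hFup : ∀ ξ : En n, F ξ ≤ b * ‖ξ‖) (ha : 0 < a) (hab : a ≤ b)
    (hΩo : IsOpen Ω) (hfr : (frontier Ω).Nonempty) {x : En n} (hx : x ∈ Ω) :
    0 < dF F Ω x := by
  have hb : 0 < b := lt_of_lt_of_le ha hab
  obtain ⟨r, hr, hball⟩ := Metric.isOpen_iff.1 hΩo x hx
  have h1 : ∀ y ∈ frontier Ω, r / b ≤ polar F (x - y) := by
    intro y hy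
    have hynot : y ∉ Ω := by rw [hΩo.frontier_eq] at hy; exact hy.2
    have hdist : r ≤ ‖x - y‖ := by
      by_contra hlt
      push_neg at hlt
      apply hynot
      apply hball
      rw [Metric.mem_ball, dist_comm, dist_eq_norm]
      exact hlt
    calc r / b ≤ ‖x - y‖ / b := by gcongr
      _ ≤ polar F (x - y) := le_polar hFup hFlow hn ha hab _
  have := le_dF (F := F) hfr h1
  calc (0:ℝ) < r / b := by positivity
    _ ≤ dF F Ω x := this

theorem rho_pos (hn : 2 ≤ n) (hFlow : ∀ ξ : En n, a * ‖ξ‖ ≤ F ξ)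
    (hFup : ∀ ξ : En n, F ξ ≤ b * ‖ξ‖) (ha : 0 < a) (hab : a ≤ b)
    (hΩo : IsOpen Ω) (hΩb : Bornology.IsBounded Ω)
    (hfr : (frontier Ω).Nonempty) {x : En n} (hx : x ∈ Ω) : 0 < rhoF F Ω :=
  lt_of_lt_of_le (dF_pos hn hFlow hFup ha hab hΩo hfr hx)
    (dF_le_rho hn hFlow ha hΩb hfr hx)

end Rho

/-- Variational characterization of `1/ρ_F(Ω)` via Lipschitz functions vanishing
outside `Ω`, with the infimum attained by the anisotropic distance function. -/
theorem inv_rhoF_variational {n : ℕ}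
    (hn : 2 ≤ n) (F : En n → ℝ) (a b : ℝ)
    (hF0 : ∀ ξ : En n, 0 ≤ F ξ)
    (hFconv : ConvexOn ℝ Set.univ F)
    (hFhom : ∀ (t : ℝ) (ξ : En n), F (t • ξ) = |t| * F ξ)
    (ha : 0 < a) (hab : a ≤ b)
    (hFlow : ∀ ξ : En n, a * ‖ξ‖ ≤ F ξ) (hFup : ∀ ξ : En n, F ξ ≤ b * ‖ξ‖)
    (hFC2 : ContDiffOn ℝ 2 F {(0 : En n)}ᶜ)
    (Ω : Set (En n)) (hΩo : IsOpen Ω) (hΩb : Bornology.IsBounded Ω)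
    :
    1 / rhoF F Ω
      = sInf { r : ℝ | ∃ (φ : En n → ℝ) (K : NNReal), LipschitzWith K φ ∧
          (∀ x ∉ Ω, φ x = 0) ∧ φ ≠ 0 ∧
          r = essSup (fun x => F (gradient φ x)) (volume.restrict Ω)
              / sSup ((fun x => |φ x|) '' Ω) } ∧
    (∀ (φ : En n → ℝ) (K : NNReal), LipschitzWith K φ → (∀ x ∉ Ω, φ x = 0) →
      φ ≠ 0 → ∀ x ∈ Ω,
        |φ x| ≤ essSup (fun y => F (gradient φ y)) (volume.restrict Ω) * dF F Ω x) ∧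
    (∃ K : NNReal, LipschitzWith K (fun x : En n => if x ∈ Ω then dF F Ω x else 0)) ∧
    essSup (fun x => F (gradient (fun y : En n => if y ∈ Ω then dF F Ω y else 0) x))
        (volume.restrict Ω)
      / sSup ((fun x => |if x ∈ Ω then dF F Ω x else 0|) '' Ω)
      = 1 / rhoF F Ω := by
  by_cases hne : Ω.Nonempty
  case neg =>
    have hΩe : Ω = ∅ := Set.not_nonempty_iff_eq_empty.1 hne
    subst hΩe
    have hrho : rhoF F (∅ : Set (En n)) = 0 := by
      unfold rhoF
      have h : {r : ℝ | ∃ x ∈ (∅ : Set (En n)), r = dF F ∅ x} = ∅ := by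
        ext r; simp
      rw [h, Real.sSup_empty]
    have hessSup0 : ∀ f : En n → ℝ, essSup f (volume.restrict (∅ : Set (En n))) = 0 := by
      intro f
      rw [Measure.restrict_empty]
      unfold essSup
      rw [ae_zero, Filter.limsup_eq]
      have h : {a : ℝ | ∀ᶠ x in (⊥ : Filter (En n)), f x ≤ a} = Set.univ := by
        ext a; simp
      rw [h]
      exact Real.sInf_of_not_bddBelow (by simpa using not_bddBelow_univ)
    refine ⟨?_, ?_, ?_, ?_⟩
    · have hset : { r : ℝ | ∃ (φ : En n → ℝ) (K : NNReal), LipschitzWith K φ ∧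
          (∀ x ∉ (∅ : Set (En n)), φ x = 0) ∧ φ ≠ 0 ∧
          r = essSup (fun x => F (gradient φ x)) (volume.restrict (∅ : Set (En n)))
              / sSup ((fun x => |φ x|) '' (∅ : Set (En n))) } = ∅ := by
        ext r
        simp only [Set.mem_setOf_eq, Set.mem_empty_iff_false, iff_false]
        rintro ⟨φ, K, hl, hv, hne0, hr⟩
        exact hne0 (funext fun x => hv x (Set.notMem_empty x))
      rw [hset, Real.sInf_empty, hrho, div_zero]
    · intro φ K _ _ _ x hx
      exact absurd hx (Set.notMem_empty x)
    · refine ⟨0, ?_⟩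
      apply LipschitzWith.of_dist_le_mul
      intro x y
      rw [if_neg (Set.notMem_empty x), if_neg (Set.notMem_empty y)]
      simp
    · rw [hessSup0, Set.image_empty, Real.sSup_empty, hrho]
      simp
  case pos =>
    obtain ⟨x₀, hx₀⟩ := hne
    have hfr : (frontier Ω).Nonempty := frontier_nonempty hn hΩb ⟨x₀, hx₀⟩
    have hρpos : 0 < rhoF F Ω := rho_pos hn hFlow hFup ha hab hΩo hΩb hfr hx₀
    have main2 : ∀ (φ : En n → ℝ) (K : NNReal), LipschitzWith K φ → (∀ x ∉ Ω, φ x = 0) →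
        ∀ x ∈ Ω, |φ x| ≤ essSup (fun y => F (gradient φ y)) (volume.restrict Ω) * dF F Ω x :=
      fun φ K h1 h2 x hx =>
        main_ineq hn hF0 hFhom ha hab hFlow hFup hΩo ⟨x₀, hx₀⟩ hfr h1 h2 hx
    have hdK := dext_lipschitz (Ω := Ω) hn hFhom hFlow ha hΩo hfr
    have hvan : ∀ x ∉ Ω, (if x ∈ Ω then dF F Ω x else 0) = 0 := fun x hx => if_neg hx
    have hdF0 : 0 < dF F Ω x₀ := dF_pos hn hFlow hFup ha hab hΩo hfr hx₀
    have hd0 : (fun y : En n => if y ∈ Ω then dF F Ω y else 0) ≠ 0 := by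
      intro h
      have h2 := congrFun h x₀
      rw [if_pos hx₀] at h2
      exact absurd h2 (ne_of_gt hdF0)
    haveI hNB : (ae (volume.restrict Ω)).NeBot := by
      rw [ae_neBot]
      intro hzero
      have hpos := hΩo.measure_pos (volume : Measure (En n)) ⟨x₀, hx₀⟩
      have h2 : volume Ω = 0 := by
        have := congrArg (fun m : Measure (En n) => m Set.univ) hzero
        simpa [Measure.restrict_apply_univ] using this
      rw [h2] at hpos
      exact lt_irrefl 0 hpos
    have hcob : Filter.IsCoboundedUnder (· ≤ ·) (ae (volume.restrict Ω))
        (fun x => F (gradient (fun y : En n => if y ∈ Ω then dF F Ω y else 0) x)) :=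
      Filter.isCoboundedUnder_le_of_le _ (fun x => hF0 _)
    have hE1 : essSup (fun x => F (gradient (fun y : En n => if y ∈ Ω then dF F Ω y else 0) x))
        (volume.restrict Ω) ≤ 1 := by
      have hrfl : essSup (fun x => F (gradient (fun y : En n => if y ∈ Ω then dF F Ω y else 0) x))
          (volume.restrict Ω) = Filter.limsup
          (fun x => F (gradient (fun y : En n => if y ∈ Ω then dF F Ω y else 0) x))
          (ae (volume.restrict Ω)) := rfl
      rw [hrfl]
      exact Filter.limsup_le_of_le hcob (Filter.Eventually.of_forall fun x =>
        dext_grad_le_one hn hFhom hFconv hFlow ha hFC2 hΩo hfr x)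
    have himg : ((fun x => |if x ∈ Ω then dF F Ω x else 0|) '' Ω)
        = {r : ℝ | ∃ x ∈ Ω, r = dF F Ω x} := by
      ext r
      constructor
      · rintro ⟨x, hx, rfl⟩
        refine ⟨x, hx, ?_⟩
        show |if x ∈ Ω then dF F Ω x else 0| = dF F Ω x
        rw [if_pos hx, abs_of_nonneg (dF_nonneg hn hFlow ha x)]
      · rintro ⟨x, hx, rfl⟩
        refine ⟨x, hx, ?_⟩
        show |if x ∈ Ω then dF F Ω x else 0| = dF F Ω x
        rw [if_pos hx, abs_of_nonneg (dF_nonneg hn hFlow ha x)]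
    have hsSup : sSup ((fun x => |if x ∈ Ω then dF F Ω x else 0|) '' Ω) = rhoF F Ω := by
      rw [himg]; rfl
    have hE2 : 1 ≤ essSup
        (fun x => F (gradient (fun y : En n => if y ∈ Ω then dF F Ω y else 0) x))
        (volume.restrict Ω) := by
      have h := main2 (fun y : En n => if y ∈ Ω then dF F Ω y else 0) _ hdK hvan x₀ hx₀
      simp only [if_pos hx₀] at h
      rw [abs_of_nonneg hdF0.le] at h
      nlinarith [h, hdF0]
    have hEeq : essSup
        (fun x => F (gradient (fun y : En n => if y ∈ Ω then dF F Ω y else 0) x))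
        (volume.restrict Ω) = 1 := le_antisymm hE1 hE2
    have hC4 : essSup
        (fun x => F (gradient (fun y : En n => if y ∈ Ω then dF F Ω y else 0) x))
          (volume.restrict Ω)
        / sSup ((fun x => |if x ∈ Ω then dF F Ω x else 0|) '' Ω) = 1 / rhoF F Ω := by
      rw [hEeq, hsSup]
    refine ⟨?_, ?_, ⟨_, hdK⟩, hC4⟩
    · have hmem : (1 / rhoF F Ω) ∈ { r : ℝ | ∃ (φ : En n → ℝ) (K : NNReal), LipschitzWith K φ ∧
          (∀ x ∉ Ω, φ x = 0) ∧ φ ≠ 0 ∧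
          r = essSup (fun x => F (gradient φ x)) (volume.restrict Ω)
              / sSup ((fun x => |φ x|) '' Ω) } :=
        ⟨(fun y : En n => if y ∈ Ω then dF F Ω y else 0), _, hdK, hvan, hd0, hC4.symm⟩
      have hlow : ∀ r ∈ { r : ℝ | ∃ (φ : En n → ℝ) (K : NNReal), LipschitzWith K φ ∧
          (∀ x ∉ Ω, φ x = 0) ∧ φ ≠ 0 ∧
          r = essSup (fun x => F (gradient φ x)) (volume.restrict Ω)
              / sSup ((fun x => |φ x|) '' Ω) }, 1 / rhoF F Ω ≤ r := by
        rintro r ⟨φ, K, hlip, hvanφ, hneφ, rfl⟩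
        have hx1 : ∃ x ∈ Ω, φ x ≠ 0 := by
          by_contra hcon
          push_neg at hcon
          apply hneφ
          funext x
          by_cases hxΩ : x ∈ Ω
          · exact hcon x hxΩ
          · exact hvanφ x hxΩ
        obtain ⟨x₁, hx₁Ω, hx₁⟩ := hx1
        obtain ⟨y₁, hy₁⟩ := id hfr
        have hy₁n : y₁ ∉ Ω := by rw [hΩo.frontier_eq] at hy₁; exact hy₁.2
        obtain ⟨R, hR⟩ := hΩb.subset_closedBall 0
        have hbddφ : BddAbove ((fun x => |φ x|) '' Ω) := by
          refine ⟨(K : ℝ) * (R + ‖y₁‖), ?_⟩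
          rintro _ ⟨x, hx, rfl⟩
          have h1 : |φ x| = |φ x - φ y₁| := by rw [hvanφ y₁ hy₁n, sub_zero]
          have h2 : |φ x - φ y₁| ≤ (K:ℝ) * dist x y₁ := by
            have := hlip.dist_le_mul x y₁
            rwa [Real.dist_eq] at this
          have h3 : dist x y₁ ≤ R + ‖y₁‖ := by
            rw [dist_eq_norm]
            refine le_trans (norm_sub_le x y₁) (add_le_add ?_ le_rfl)
            have := hR hx
            rwa [Metric.mem_closedBall, dist_zero_right] at this
          calc |φ x| = |φ x - φ y₁| := h1
            _ ≤ (K:ℝ) * dist x y₁ := h2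
            _ ≤ (K:ℝ) * (R + ‖y₁‖) := mul_le_mul_of_nonneg_left h3 K.coe_nonneg
        have hMpos : 0 < sSup ((fun x => |φ x|) '' Ω) :=
          lt_of_lt_of_le (abs_pos.mpr hx₁)
            (le_csSup hbddφ (Set.mem_image_of_mem (fun x => |φ x|) hx₁Ω))
        have hbddL : Filter.IsBoundedUnder (· ≤ ·) (ae (volume.restrict Ω))
            (fun y => F (gradient φ y)) := by
          refine ⟨(b * K : ℝ), Filter.eventually_map.2 (Filter.Eventually.of_forall ?_)⟩
          intro y
          calc F (gradient φ y) ≤ b * ‖gradient φ y‖ := hFup _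
            _ ≤ b * K := by
                apply mul_le_mul_of_nonneg_left _ (le_trans ha.le hab)
                have h1 : ‖gradient φ y‖ = ‖fderiv ℝ φ y‖ := by
                  rw [gradient]
                  exact LinearIsometryEquiv.norm_map _ _
                rw [h1]
                exact norm_fderiv_le_of_lipschitz ℝ hlip
        have hL0 : 0 ≤ essSup (fun y => F (gradient φ y)) (volume.restrict Ω) := by
          have hrfl : essSup (fun y => F (gradient φ y)) (volume.restrict Ω)
              = Filter.limsup (fun y => F (gradient φ y)) (ae (volume.restrict Ω)) := rfl
          rw [hrfl]
          exact Filter.le_limsup_of_frequently_le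
            (Filter.Frequently.of_forall fun y => hF0 _) hbddL
        have hMle : sSup ((fun x => |φ x|) '' Ω)
            ≤ essSup (fun y => F (gradient φ y)) (volume.restrict Ω) * rhoF F Ω := by
          apply csSup_le ⟨|φ x₁|, Set.mem_image_of_mem (fun x => |φ x|) hx₁Ω⟩
          rintro _ ⟨x, hx, rfl⟩
          calc |φ x| ≤ essSup (fun y => F (gradient φ y)) (volume.restrict Ω) * dF F Ω x :=
                main2 φ K hlip hvanφ x hx
            _ ≤ essSup (fun y => F (gradient φ y)) (volume.restrict Ω) * rhoF F Ω :=
                mul_le_mul_of_nonneg_left (dF_le_rho hn hFlow ha hΩb hfr hx) hL0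
        rw [div_le_div_iff₀ hρpos hMpos]
        nlinarith [hMle]
      exact le_antisymm (le_csInf ⟨_, hmem⟩ hlow)
        (csInf_le ⟨1 / rhoF F Ω, fun r hr => hlow r hr⟩ hmem)
    · intro φ K h1 h2 _ x hx
      exact main2 φ K h1 h2 x hx

end
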